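/- Applying the composition of divided-difference-type operators ∂̂_{n−1}⋯∂̂₂∂̂₁ to the staircase monomial x^{ρ⁽ⁿ⁾} = x₁^{n−1}x₂^{n−2}⋯x_{n−1} yields (1−x₁)(1−x₂)⋯(1−x_{n−1}) · x₁^{n−2}x₂^{n−3}⋯x_{n−2}. -/

import Mathlib

/-!
After `∂̂₁, …, ∂̂ₖ` the staircase monomial has become
`(1 - x₁)⋯(1 - xₖ) · x₁^{n-2}⋯xₖ^{n-k-1} x_{k+1}^{n-k-1} x_{k+2}^{n-k-2}⋯`.
Here `x_{k+1}` and `x_{k+2}` carry the same exponent except for one extra factor `x_{k+1}`, so the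
current function is `x_{k+1} g` with `g` symmetric in `x_{k+1}, x_{k+2}`, and
`∂̂_{k+1}(x_{k+1} g) = (1 - x_{k+1}) g` is the next stage.
-/

open MvPolynomial

/-- The rational function field `ℚ(x₁, …, xₙ)`. -/
abbrev Kf (n : ℕ) := FractionRing (MvPolynomial (Fin n) ℚ)

/-- The variable `xᵢ` as an element of `ℚ(x₁, …, xₙ)`. -/
noncomputable def Xf (n : ℕ) (i : Fin n) : Kf n :=
  algebraMap (MvPolynomial (Fin n) ℚ) (Kf n) (MvPolynomial.X i)

/-- The field automorphism of `ℚ(x₁, …, xₙ)` exchanging the variables `xᵢ` and `xⱼ`. -/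
noncomputable def swapf (n : ℕ) (i j : Fin n) : Kf n ≃+* Kf n :=
  IsFractionRing.ringEquivOfRingEquiv
    (MvPolynomial.renameEquiv ℚ (Equiv.swap i j)).toRingEquiv

/-- The divided difference operator `Aᵢⱼ f = (f - sᵢⱼ f)/(xᵢ - xⱼ)`. -/
noncomputable def Af (n : ℕ) (i j : Fin n) (f : Kf n) : Kf n :=
  (f - swapf n i j f) / (Xf n i - Xf n j)

/-- The Demazure operator `π̃ᵢ = Aᵢ ∘ (1 - x_{i+1})` (here with indices `i, j`). -/
noncomputable def pitf (n : ℕ) (i j : Fin n) (f : Kf n) : Kf n :=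
  Af n i j ((1 - Xf n j) * f)

/-- The operator `∂̂ᵢ := (1 - xᵢ)·Aᵢ` on `ℚ(x₁,…,xₙ)`, for a natural-number index
(acting as the identity for out-of-range indices). -/
noncomputable def parhf (n : ℕ) (i : ℕ) (f : Kf n) : Kf n :=
  if h : i + 1 < n then
    (1 - Xf n ⟨i, Nat.lt_of_succ_lt h⟩) * Af n ⟨i, Nat.lt_of_succ_lt h⟩ ⟨i + 1, h⟩ f
  else f

lemma swapf_Xf (n : ℕ) (i j l : Fin n) :
    swapf n i j (Xf n l) = Xf n (Equiv.swap i j l) := by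
  simp [swapf, Xf]

lemma Xf_sub_Xf_ne_zero {n : ℕ} {i j : Fin n} (h : i ≠ j) : Xf n i - Xf n j ≠ 0 := by
  rw [sub_ne_zero, Xf, Xf]
  exact fun he => h (MvPolynomial.X_injective (IsFractionRing.injective _ _ he))

lemma Af_Xf_mul_of_swapf_eq {n : ℕ} {i j : Fin n} (hij : i ≠ j) {f : Kf n}
    (hf : swapf n i j f = f) : Af n i j (Xf n i * f) = f := by
  rw [Af, map_mul, swapf_Xf, Equiv.swap_apply_left, hf, ← sub_mul,
    mul_div_cancel_left₀ _ (Xf_sub_Xf_ne_zero hij)]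

lemma parhf_Xf_mul_of_swapf_eq {n : ℕ} (i : Fin n) (h : i.val + 1 < n) {f : Kf n}
    (hf : swapf n i ⟨i.val + 1, h⟩ f = f) : parhf n i (Xf n i * f) = (1 - Xf n i) * f := by
  rw [parhf, dif_pos h, Af_Xf_mul_of_swapf_eq (by simp [Fin.ext_iff]) hf]

noncomputable def mixedMonomial (n : ℕ) (a b : Fin n → ℕ) : Kf n :=
  (∏ i, (1 - Xf n i) ^ b i) * ∏ i, Xf n i ^ a i

lemma swapf_mixedMonomial (n : ℕ) (i j : Fin n) (a b : Fin n → ℕ) :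
    swapf n i j (mixedMonomial n a b) =
      mixedMonomial n (a ∘ Equiv.swap i j) (b ∘ Equiv.swap i j) := by
  simp only [mixedMonomial, map_mul, map_prod, map_pow, map_sub, map_one, swapf_Xf,
    Function.comp_apply]
  congr 1 <;> exact Fintype.prod_equiv (Equiv.swap i j) _ _ fun l => by simp

lemma swapf_mixedMonomial_of_eq {n : ℕ} {i j : Fin n} {a b : Fin n → ℕ}
    (ha : a i = a j) (hb : b i = b j) :
    swapf n i j (mixedMonomial n a b) = mixedMonomial n a b := by
  have comp_swap : ∀ c : Fin n → ℕ, c i = c j → c ∘ Equiv.swap i j = c := fun c hc => by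
    ext l
    simp only [Function.comp_apply, Equiv.swap_apply_def]
    split_ifs <;> simp_all
  rw [swapf_mixedMonomial, comp_swap a ha, comp_swap b hb]

lemma Fintype.prod_pow_add_single {ι M : Type*} [Fintype ι] [DecidableEq ι] [CommMonoid M]
    (x : ι → M) (e : ι → ℕ) (i : ι) :
    ∏ l, x l ^ (e + Pi.single i 1 : ι → ℕ) l = x i * ∏ l, x l ^ e l := by
  simp only [Pi.add_apply, pow_add, Finset.prod_mul_distrib, mul_comm (x i)]
  congr 1
  rw [Fintype.prod_eq_single i fun l hl => by rw [Pi.single_eq_of_ne hl, pow_zero],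
    Pi.single_eq_same, pow_one]

lemma mixedMonomial_add_single_left (n : ℕ) (a b : Fin n → ℕ) (i : Fin n) :
    mixedMonomial n (a + Pi.single i 1) b = Xf n i * mixedMonomial n a b := by
  rw [mixedMonomial, mixedMonomial, Fintype.prod_pow_add_single]
  ring

lemma mixedMonomial_add_single_right (n : ℕ) (a b : Fin n → ℕ) (i : Fin n) :
    mixedMonomial n a (b + Pi.single i 1) = (1 - Xf n i) * mixedMonomial n a b := by
  rw [mixedMonomial, mixedMonomial, Fintype.prod_pow_add_single, mul_assoc]

lemma parhf_mixedMonomial {n : ℕ} (i : Fin n) (h : i.val + 1 < n) {a b : Fin n → ℕ}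
    (ha : a i = a ⟨i.val + 1, h⟩) (hb : b i = b ⟨i.val + 1, h⟩) :
    parhf n i (mixedMonomial n (a + Pi.single i 1) b) =
      mixedMonomial n a (b + Pi.single i 1) := by
  rw [mixedMonomial_add_single_left, mixedMonomial_add_single_right,
    parhf_Xf_mul_of_swapf_eq i h (swapf_mixedMonomial_of_eq ha hb)]

def staircaseExp (n k : ℕ) (i : Fin n) : ℕ :=
  if i.val < k then n - 2 - i.val else n - 1 - i.val

def prefixIndicator (n k : ℕ) (i : Fin n) : ℕ :=
  if i.val < k then 1 else 0

lemma staircaseExp_eq_succ_add_single {n k : ℕ} (h : k + 1 < n) :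
    staircaseExp n k = staircaseExp n (k + 1) + Pi.single ⟨k, by omega⟩ 1 := by
  ext i
  simp only [staircaseExp, Pi.add_apply, Pi.single_apply, Fin.ext_iff]
  split_ifs <;> omega

lemma prefixIndicator_succ {n k : ℕ} (h : k < n) :
    prefixIndicator n (k + 1) = prefixIndicator n k + Pi.single ⟨k, h⟩ 1 := by
  ext i
  simp only [prefixIndicator, Pi.add_apply, Pi.single_apply, Fin.ext_iff]
  split_ifs <;> omega

lemma parhf_mixedMonomial_staircaseExp {n k : ℕ} (h : k + 1 < n) :
    parhf n k (mixedMonomial n (staircaseExp n k) (prefixIndicator n k)) =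
      mixedMonomial n (staircaseExp n (k + 1)) (prefixIndicator n (k + 1)) := by
  rw [staircaseExp_eq_succ_add_single h, prefixIndicator_succ (by omega)]
  exact parhf_mixedMonomial ⟨k, by omega⟩ h
    (by simp only [staircaseExp]; split_ifs <;> omega)
    (by simp only [prefixIndicator]; split_ifs <;> omega)

lemma foldl_parhf_staircase {n k : ℕ} (hk : k ≤ n - 1) :
    (List.range k).foldl (fun f i => parhf n i f) (∏ i : Fin n, Xf n i ^ (n - 1 - i.val)) =
      mixedMonomial n (staircaseExp n k) (prefixIndicator n k) := by
  induction k with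
  | zero => simp [mixedMonomial, staircaseExp, prefixIndicator]
  | succ k ih =>
    rw [List.range_succ, List.foldl_append, ih (by omega), List.foldl_cons, List.foldl_nil,
      parhf_mixedMonomial_staircaseExp (by omega)]

/-- Applying `∂̂_{n-1} ⋯ ∂̂₂ ∂̂₁` to the staircase monomial
`x^{ρ⁽ⁿ⁾} = x₁^{n-1} x₂^{n-2} ⋯ x_{n-1}` yields
`(1-x₁)(1-x₂)⋯(1-x_{n-1}) · x₁^{n-2} x₂^{n-3} ⋯ x_{n-2}`. -/
theorem parh_staircase (n : ℕ) :
    (List.range (n - 1)).foldl (fun f i => parhf n i f)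
        (∏ i : Fin n, Xf n i ^ (n - 1 - i.val))
      = (∏ i : Fin n, if i.val + 1 < n then 1 - Xf n i else 1) *
          ∏ i : Fin n, Xf n i ^ (n - 2 - i.val) := by
  rw [foldl_parhf_staircase le_rfl, mixedMonomial]
  congr 1 <;> refine Finset.prod_congr rfl fun i _ => ?_
  · simp only [prefixIndicator, pow_ite, pow_one, pow_zero]
    exact if_congr (by omega) rfl rfl
  · simp only [staircaseExp]
    congr 1
    split_ifs <;> omega
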